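/- arXiv:2508.15580 — 2 statements merged into one kernel-verified Lean document; each statement's English description precedes it below -/
import Mathlib

section
/- Let k ≥ 2 and let A_1, …, A_k be bit strings with lengths m_1, …, m_k, each m_i ≥ 3, such that S[A_i,3] = P[A_{i+1},3] for i = 1, …, k−1. Let S_1, …, S_k be bit strings with S_i of length m_i and D_{m_i}(S_i, A_i) ≤ 1 for all i. Then D_3(S[S_i,3], P[S_{i+1},3]) ≤ 2 for every i = 1, …, k−1. -/
/-!
`D n x y ≤ 1` says that `x` and `y` are equal or cyclic neighbours modulo `2^n`. Cyclic
neighbourhood survives both truncations: reducing modulo `2^k` commutes with the successor,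
and dividing by `2^(n-k)` sends a successor to the same value or to the cyclic successor of
the quotient. So each estimated overlap is within distance 1 of the true overlap, which is
shared by adjacent blocks, and the triangle inequality for `D 3` gives the bound 2.
-/

/-- Distance `D_n(x,y) = min(|x-y|, 2^n - |x-y|)` on n-bit strings (as naturals < 2^n). -/
def D (n x y : ℕ) : ℤ := min |(x : ℤ) - (y : ℤ)| (2 ^ n - |(x : ℤ) - (y : ℤ)|)

/-- Wrap-around addition `x +_n c`: the unique natural in [0, 2^n) congruent to x + c mod 2^n. -/
def wadd (n : ℕ) (x : ℕ) (c : ℤ) : ℕ := (((x : ℤ) + c) % (2 ^ n : ℤ)).toNat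

/-- `P[x,k]`: the k-bit prefix of the n-bit string x. -/
def pre (n k x : ℕ) : ℕ := x / 2 ^ (n - k)

/-- `S[x,k]`: the k-bit suffix of x. -/
def suf (k x : ℕ) : ℕ := x % 2 ^ k

/-- Catenation of an m-bit string x with a t-bit string y. -/
def cat (t x y : ℕ) : ℕ := x * 2 ^ t + y

lemma D_comm (n x y : ℕ) : D n x y = D n y x := by
  rw [D, D, abs_sub_comm]

lemma D_triangle {n x y z : ℕ} (hx : x < 2 ^ n) (hy : y < 2 ^ n) (hz : z < 2 ^ n) :
    D n x z ≤ D n x y + D n y z := by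
  simp only [D, Int.abs_eq_natAbs]
  zify at hx hy hz
  generalize ((2 : ℤ) ^ n) = N at *
  omega

lemma succ_mod_eq {x N : ℕ} (hx : x < N) : (x + 1) % N = if x + 1 = N then 0 else x + 1 := by
  split_ifs with h
  · rw [h, Nat.mod_self]
  · exact Nat.mod_eq_of_lt (by omega)

lemma D_le_one_iff {n x y : ℕ} (hx : x < 2 ^ n) (hy : y < 2 ^ n) :
    D n x y ≤ 1 ↔ x = y ∨ (x + 1) % 2 ^ n = y ∨ (y + 1) % 2 ^ n = x := by
  rw [succ_mod_eq hx, succ_mod_eq hy]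
  simp only [D, Int.abs_eq_natAbs]
  rw [show ((2 : ℤ) ^ n) = ((2 ^ n : ℕ) : ℤ) by push_cast; rfl]
  generalize 2 ^ n = N at *
  split_ifs <;> omega

lemma pre_lt {n k x : ℕ} (hkn : k ≤ n) (hx : x < 2 ^ n) : pre n k x < 2 ^ k :=
  Nat.div_lt_of_lt_mul (by rwa [← pow_add, Nat.sub_add_cancel hkn])

lemma succ_mod_div_eq {x b u : ℕ} (hx : x < b * u) :
    (x + 1) % (b * u) / u = x / u ∨ (x + 1) % (b * u) / u = (x / u + 1) % b := by
  have hu : 0 < u := Nat.pos_of_mul_pos_left (by omega : 0 < b * u)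
  rw [succ_mod_eq hx]
  split_ifs with hwrap
  · right
    have hq : (x + 1) / u = b := by rw [hwrap, Nat.mul_div_cancel _ hu]
    rw [Nat.succ_div, if_pos ⟨b, by rw [hwrap, Nat.mul_comm]⟩] at hq
    rw [hq, Nat.mod_self, Nat.zero_div]
  · have hlt : (x + 1) / u < b := Nat.div_lt_of_lt_mul (by rw [Nat.mul_comm u b]; omega)
    rw [Nat.succ_div] at hlt ⊢
    split_ifs at hlt ⊢
    · right; rw [Nat.mod_eq_of_lt hlt]
    · left; rfl

lemma D_suf_le_one {n k x y : ℕ} (hkn : k ≤ n) (hx : x < 2 ^ n) (hy : y < 2 ^ n)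
    (h : D n x y ≤ 1) : D k (suf k x) (suf k y) ≤ 1 := by
  have hdvd : 2 ^ k ∣ 2 ^ n := pow_dvd_pow 2 hkn
  unfold suf
  rw [D_le_one_iff (Nat.mod_lt _ (by positivity)) (Nat.mod_lt _ (by positivity))]
  rcases (D_le_one_iff hx hy).1 h with rfl | rfl | rfl
  · exact Or.inl rfl
  · right; left
    rw [Nat.mod_mod_of_dvd _ hdvd, Nat.mod_add_mod]
  · right; right
    rw [Nat.mod_mod_of_dvd _ hdvd, Nat.mod_add_mod]

lemma D_pre_le_one {n k x y : ℕ} (hkn : k ≤ n) (hx : x < 2 ^ n) (hy : y < 2 ^ n)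
    (h : D n x y ≤ 1) : D k (pre n k x) (pre n k y) ≤ 1 := by
  have hsplit : 2 ^ n = 2 ^ k * 2 ^ (n - k) := by rw [← pow_add, Nat.add_sub_cancel' hkn]
  rw [D_le_one_iff (pre_lt hkn hx) (pre_lt hkn hy)]
  rcases (D_le_one_iff hx hy).1 h with rfl | rfl | rfl
  · exact Or.inl rfl
  · rw [hsplit] at hx ⊢
    rcases succ_mod_div_eq hx with h' | h' <;> simp only [pre, h', true_or, or_true]
  · rw [hsplit] at hy ⊢
    rcases succ_mod_div_eq hy with h' | h' <;> simp only [pre, h', true_or, or_true]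

theorem stmt_4_general (k : ℕ) (m A S : ℕ → ℕ)
    (hm : ∀ i, 1 ≤ i → i ≤ k → 3 ≤ m i)
    (hA : ∀ i, 1 ≤ i → i ≤ k → A i < 2 ^ m i)
    (hS : ∀ i, 1 ≤ i → i ≤ k → S i < 2 ^ m i)
    (hover : ∀ i, 1 ≤ i → i ≤ k - 1 → suf 3 (A i) = pre (m (i + 1)) 3 (A (i + 1)))
    (hD : ∀ i, 1 ≤ i → i ≤ k → D (m i) (S i) (A i) ≤ 1) :
    ∀ i, 1 ≤ i → i ≤ k - 1 →
      D 3 (suf 3 (S i)) (pre (m (i + 1)) 3 (S (i + 1))) ≤ 2 := by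
  intro i hi hik
  obtain ⟨hi', hk'⟩ : i ≤ k ∧ i + 1 ≤ k := by omega
  have hsuf : D 3 (suf 3 (S i)) (suf 3 (A i)) ≤ 1 :=
    D_suf_le_one (hm i hi hi') (hS i hi hi') (hA i hi hi') (hD i hi hi')
  have hpre : D 3 (pre (m (i + 1)) 3 (A (i + 1))) (pre (m (i + 1)) 3 (S (i + 1))) ≤ 1 :=
    D_pre_le_one (hm _ (by omega) hk') (hA _ (by omega) hk') (hS _ (by omega) hk')
      (by rw [D_comm]; exact hD _ (by omega) hk')
  rw [← hover i hi hik] at hpre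
  have htri := D_triangle (x := suf 3 (S i)) (y := suf 3 (A i))
    (Nat.mod_lt _ (by positivity)) (Nat.mod_lt _ (by positivity))
    (pre_lt (hm _ (by omega) hk') (hS _ (by omega) hk'))
  linarith

/-- with 3-bit overlaps and per-block errors ≤ 1, adjacent overlap
    estimates are at distance ≤ 2. -/
theorem stmt_4 (k : ℕ) (hk : 2 ≤ k) (m A S : ℕ → ℕ)
    (hm : ∀ i, 1 ≤ i → i ≤ k → 3 ≤ m i)
    (hA : ∀ i, 1 ≤ i → i ≤ k → A i < 2 ^ m i)
    (hS : ∀ i, 1 ≤ i → i ≤ k → S i < 2 ^ m i)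
    (hover : ∀ i, 1 ≤ i → i ≤ k - 1 → suf 3 (A i) = pre (m (i + 1)) 3 (A (i + 1)))
    (hD : ∀ i, 1 ≤ i → i ≤ k → D (m i) (S i) (A i) ≤ 1) :
    ∀ i, 1 ≤ i → i ≤ k - 1 →
      D 3 (suf 3 (S i)) (pre (m (i + 1)) 3 (S (i + 1))) ≤ 2 :=
  stmt_4_general k m A S hm hA hS hover hD
end

section
/- Let m ≥ 3 and t ≥ 3. Let A be an m-bit string and B a t-bit string with S[A,3] = P[B,3]. Let S be an m-bit string with D_m(S,A) ≤ 1 and T a t-bit string with D_t(T,B) ≤ 1. Let b₁, b₂, b₃ be integers with |b₁| ≤ 1, |b₂| ≤ 1, |b₃| ≤ 1 such that T +_t b₁ = B, P[T,3] +_3 b₂ = P[B,3], and S[S,3] +_3 b₃ = P[B,3]. Define the (m+t−3)-bit strings S' = (S +_m (b₃ − b₂)) ∘ S[T, t−3] and A' = A ∘ S[B, t−3]. Then S' +_{m+t−3} b₁ = A'. -/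
lemma cast_wadd (n x : ℕ) (c : ℤ) : (wadd n x c : ℤ) = ((x : ℤ) + c) % 2 ^ n :=
  Int.toNat_of_nonneg (Int.emod_nonneg _ (by positivity))

lemma wadd_modEq (n x : ℕ) (c : ℤ) : (x : ℤ) + c ≡ wadd n x c [ZMOD 2 ^ n] := by
  rw [cast_wadd]
  exact (Int.mod_modEq _ _).symm

lemma wadd_eq_iff {n x y : ℕ} {c : ℤ} :
    wadd n x c = y ↔ y < 2 ^ n ∧ (x : ℤ) + c ≡ y [ZMOD 2 ^ n] := by
  constructor
  · rintro rfl
    refine ⟨?_, wadd_modEq n x c⟩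
    rw [← Nat.cast_lt (α := ℤ), cast_wadd]
    exact_mod_cast Int.emod_lt_of_pos _ (by positivity)
  · rintro ⟨hy, hxy⟩
    rw [← Nat.cast_inj (R := ℤ), cast_wadd, hxy]
    exact Int.emod_eq_of_lt (by positivity) (by exact_mod_cast hy)

lemma suf_modEq (k x : ℕ) : (suf k x : ℤ) ≡ x [ZMOD 2 ^ k] := by
  rw [suf]
  push_cast
  exact Int.mod_modEq _ _

lemma suf_lt (k x : ℕ) : suf k x < 2 ^ k :=
  Nat.mod_lt _ (by positivity)

lemma cat_lt {m e x r : ℕ} (hx : x < 2 ^ m) (hr : r < 2 ^ e) : cat e x r < 2 ^ (m + e) :=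
  calc x * 2 ^ e + r < (x + 1) * 2 ^ e := by linarith
    _ ≤ 2 ^ m * 2 ^ e := Nat.mul_le_mul_right _ hx
    _ = 2 ^ (m + e) := (pow_add 2 m e).symm

lemma cat_add_modEq {m e x y r r' : ℕ} {b k : ℤ} (hxy : (x : ℤ) + k ≡ y [ZMOD 2 ^ m])
    (hr : (r : ℤ) + b = r' + 2 ^ e * k) :
    (cat e x r : ℤ) + b ≡ cat e y r' [ZMOD 2 ^ (m + e)] := by
  have hhigh : 2 ^ e * ((x : ℤ) + k) ≡ 2 ^ e * y [ZMOD 2 ^ e * 2 ^ m] := hxy.mul_left'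
  rw [pow_add, mul_comm (2 ^ m : ℤ)]
  calc (cat e x r : ℤ) + b = 2 ^ e * ((x : ℤ) + k) + r' := by push_cast [cat]; linear_combination hr
    _ ≡ 2 ^ e * y + r' [ZMOD 2 ^ e * 2 ^ m] := hhigh.add_right _
    _ = cat e y r' := by push_cast [cat]; ring

lemma eq_of_modEq_of_abs_le_one {n a b : ℤ} (hn : 2 < n) (ha : |a| ≤ 1) (hb : |b| ≤ 1)
    (h : a ≡ b [ZMOD n]) : a = b := by
  obtain ⟨ha₁, ha₂⟩ := abs_le.mp ha
  obtain ⟨hb₁, hb₂⟩ := abs_le.mp hb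
  have := Int.eq_zero_of_abs_lt_dvd h.dvd (abs_lt.mpr ⟨by linarith, by linarith⟩)
  linarith

lemma exists_add_modEq_of_D_le_one {n x y : ℕ} (hx : x < 2 ^ n) (hy : y < 2 ^ n)
    (h : D n x y ≤ 1) : ∃ d : ℤ, |d| ≤ 1 ∧ (x : ℤ) + d ≡ y [ZMOD 2 ^ n] := by
  have hx' : (x : ℤ) < 2 ^ n := by exact_mod_cast hx
  have hy' : (y : ℤ) < 2 ^ n := by exact_mod_cast hy
  have hx₀ : (0 : ℤ) ≤ x := x.cast_nonneg
  have hy₀ : (0 : ℤ) ≤ y := y.cast_nonneg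
  rcases min_le_iff.mp h with h | h
  · exact ⟨y - x, by rwa [abs_sub_comm], by rw [add_sub_cancel]⟩
  · rcases abs_cases ((x : ℤ) - y) with ⟨hxy, _⟩ | ⟨hxy, _⟩ <;> rw [hxy] at h
    · refine ⟨1, le_rfl, (Int.modEq_iff_dvd.mpr ⟨1, ?_⟩).symm⟩
      linarith
    · refine ⟨-1, by norm_num, (Int.modEq_iff_dvd.mpr ⟨-1, ?_⟩).symm⟩
      linarith

lemma exists_carry {e j x y : ℕ} {b : ℤ} (hb : |b| ≤ 1)
    (h : (x : ℤ) + b ≡ y [ZMOD 2 ^ (e + j)]) :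
    ∃ k : ℤ, |k| ≤ 1 ∧ (suf e x : ℤ) + b = suf e y + 2 ^ e * k ∧
      ((x / 2 ^ e : ℕ) : ℤ) + k ≡ (y / 2 ^ e : ℕ) [ZMOD 2 ^ j] := by
  have hlow : (suf e x : ℤ) + b ≡ suf e y [ZMOD 2 ^ e] :=
    calc (suf e x : ℤ) + b ≡ x + b [ZMOD 2 ^ e] := (suf_modEq e x).add_right b
      _ ≡ y [ZMOD 2 ^ e] := h.of_dvd (pow_dvd_pow 2 (Nat.le_add_right e j))
      _ ≡ suf e y [ZMOD 2 ^ e] := (suf_modEq e y).symm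
  obtain ⟨k, hk⟩ := Int.modEq_iff_dvd.mp hlow.symm
  have hpos : (0 : ℤ) < 2 ^ e := by positivity
  have hkb : |2 ^ e * k| ≤ 2 ^ e * 1 := by
    have hx : (suf e x : ℤ) < 2 ^ e := by exact_mod_cast suf_lt e x
    have hy : (suf e y : ℤ) < 2 ^ e := by exact_mod_cast suf_lt e y
    have hx₀ : (0 : ℤ) ≤ suf e x := Nat.cast_nonneg _
    have hy₀ : (0 : ℤ) ≤ suf e y := Nat.cast_nonneg _
    obtain ⟨hb₁, hb₂⟩ := abs_le.mp hb
    rw [← hk, abs_le]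
    constructor <;> linarith
  rw [abs_mul, abs_of_pos hpos] at hkb
  refine ⟨k, le_of_mul_le_mul_left hkb hpos, by linarith, ?_⟩
  have hdecomp (z : ℕ) : (z : ℤ) = 2 ^ e * ((z / 2 ^ e : ℕ) : ℤ) + suf e z := by
    rw [suf]
    exact_mod_cast (Nat.div_add_mod z (2 ^ e)).symm
  refine Int.ModEq.mul_left_cancel' hpos.ne' ?_
  rw [← pow_add]
  calc 2 ^ e * (((x / 2 ^ e : ℕ) : ℤ) + k) = x + b - suf e y := by
        linear_combination -(hdecomp x) - hk
    _ ≡ y - suf e y [ZMOD 2 ^ (e + j)] := h.sub_right _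
    _ = 2 ^ e * ((y / 2 ^ e : ℕ) : ℤ) := by linear_combination hdecomp y

theorem stmt_13_general (m t : ℕ) (hm : 3 ≤ m) (ht : 3 ≤ t)
    (A B : ℕ) (hA : A < 2 ^ m) (hAB : suf 3 A = pre t 3 B)
    (S : ℕ) (hS : S < 2 ^ m) (hSA : D m S A ≤ 1)
    (T : ℕ)
    (b₁ b₂ b₃ : ℤ) (hb₁ : |b₁| ≤ 1) (hb₂ : |b₂| ≤ 1) (hb₃ : |b₃| ≤ 1)
    (h₁ : wadd t T b₁ = B)
    (h₂ : wadd 3 (pre t 3 T) b₂ = pre t 3 B) (h₃ : wadd 3 (suf 3 S) b₃ = pre t 3 B) :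
    wadd (m + t - 3) (cat (t - 3) (wadd m S (b₃ - b₂)) (suf (t - 3) T)) b₁ =
      cat (t - 3) A (suf (t - 3) B) := by
  obtain ⟨e, rfl⟩ : ∃ e, t = e + 3 := ⟨t - 3, by omega⟩
  rw [show m + (e + 3) - 3 = m + e by omega, Nat.add_sub_cancel]
  simp only [pre, Nat.add_sub_cancel] at hAB h₂ h₃
  set q := B / 2 ^ e
  obtain ⟨k, hk, hlow, hhigh⟩ := exists_carry hb₁ (wadd_eq_iff.mp h₁).2
  have hkb₂ : k = b₂ := eq_of_modEq_of_abs_le_one (by norm_num) hk hb₂ <|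
    Int.ModEq.add_left_cancel' _ (hhigh.trans (wadd_eq_iff.mp h₂).2.symm)
  rw [hkb₂] at hlow
  obtain ⟨d, hd, hSd⟩ := exists_add_modEq_of_D_le_one hS hA hSA
  have hA_q : (A : ℤ) ≡ q [ZMOD 2 ^ 3] := hAB ▸ (suf_modEq 3 A).symm
  have hS_q : (S : ℤ) + b₃ ≡ q [ZMOD 2 ^ 3] :=
    ((suf_modEq 3 S).symm.add_right b₃).trans (wadd_eq_iff.mp h₃).2
  have hdb₃ : d = b₃ := eq_of_modEq_of_abs_le_one (by norm_num) hd hb₃ <|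
    Int.ModEq.add_left_cancel' _
      (((hSd.of_dvd (pow_dvd_pow 2 hm)).trans hA_q).trans hS_q.symm)
  have hS' : (wadd m S (b₃ - b₂) : ℤ) + b₂ ≡ A [ZMOD 2 ^ m] :=
    calc (wadd m S (b₃ - b₂) : ℤ) + b₂ ≡ S + (b₃ - b₂) + b₂ [ZMOD 2 ^ m] :=
          (wadd_modEq m S _).symm.add_right _
      _ = S + d := by rw [hdb₃]; ring
      _ ≡ A [ZMOD 2 ^ m] := hSd
  exact wadd_eq_iff.mpr ⟨cat_lt hA (suf_lt e B), cat_add_modEq hS' hlow⟩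

/-- the corrected catenation satisfies `S' +_{m+t-3} b₁ = A'`. -/
theorem stmt_13 (m t : ℕ) (hm : 3 ≤ m) (ht : 3 ≤ t)
    (A B : ℕ) (hA : A < 2 ^ m) (hB : B < 2 ^ t) (hAB : suf 3 A = pre t 3 B)
    (S : ℕ) (hS : S < 2 ^ m) (hSA : D m S A ≤ 1)
    (T : ℕ) (hT : T < 2 ^ t) (hTB : D t T B ≤ 1)
    (b₁ b₂ b₃ : ℤ) (hb₁ : |b₁| ≤ 1) (hb₂ : |b₂| ≤ 1) (hb₃ : |b₃| ≤ 1)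
    (h₁ : wadd t T b₁ = B)
    (h₂ : wadd 3 (pre t 3 T) b₂ = pre t 3 B) (h₃ : wadd 3 (suf 3 S) b₃ = pre t 3 B) :
    wadd (m + t - 3) (cat (t - 3) (wadd m S (b₃ - b₂)) (suf (t - 3) T)) b₁ =
      cat (t - 3) A (suf (t - 3) B) :=
  stmt_13_general m t hm ht A B hA hAB S hS hSA T b₁ b₂ b₃ hb₁ hb₂ hb₃ h₁ h₂ h₃
end
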